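/- Consider the decomposition process on KLM sequences: the cleaning step produces from ξ₀ sequences ξ with rank(ξ) ≤_lex rank(ξ₀) and size(ξ) ≤ g(size(ξ₀)) where g(x) = x^x, and each decomposition step replaces ξ by sequences ξ' with rank(ξ') <_lex rank(ξ) and size(ξ') ≤ h(size(ξ)) where h(x) = x^{x^{1+x}}. Identify the rank (r_d,…,r_0) ∈ ℕ^{d+1} of a KLM sequence with the ordinal α = ω^d·r_d + ⋯ + ω^0·r_0 < ω^{d+1}, and suppose the size of the ordinal (max of d and the coefficients r_i) is bounded by the size of the KLM sequence. Then along any branch of a decomposition forest rooted at a cleaning of ξ₀, the sequence of ordinal ranks α_{ξ'_0} > α_{ξ₁} > α_{ξ₂} > ⋯ is a strictly descending sequence of ordinals below ω^{d+1} that is (g(size(ξ₀)), h)-controlled, i.e., the size of the j-th ordinal is at most h^j(g(size(ξ₀))); consequently, by the length function theorem, the branch has length at most h_{ω^{d+1}}(g(size(ξ₀))) (the Cichoń function relative to h), provided g(size(ξ₀)) ≥ d + 1. -/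

import Mathlib

/-!
Ordinals `α < ω^ω` are represented in Cantor normal form by their list of
coefficients, least significant first.  `CichonEqs h C` says that `C` is the
Cichoń hierarchy relative to `h` (with the standard fundamental sequences).
-/

/-- `C` satisfies the defining equations of the Cichoń hierarchy relative to
`h`: `h_0(x) = 0`, `h_{α+1}(x) = 1 + h_α(h(x))`, and `h_λ(x) = h_{λ(x)}(x)`
where for a limit `λ = β + ω^{k+1}` in CNF, `λ(x) = β + ω^k·(x+1)`. -/
def CichonEqs (h : ℕ → ℕ) (C : List ℕ → ℕ → ℕ) : Prop :=
  (∀ m x, C (List.replicate m 0) x = 0) ∧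
  (∀ c l x, C ((c + 1) :: l) x = 1 + C (c :: l) (h x)) ∧
  (∀ k c r x, C (List.replicate (k + 1) 0 ++ (c + 1) :: r) x
      = C (List.replicate k 0 ++ (x + 1) :: c :: r) x)

/-- Strict lexicographic order on `ℕ^{d+1}`, most significant coordinate at
the largest index. -/
def LexLt {d : ℕ} (r s : Fin (d + 1) → ℕ) : Prop :=
  ∃ i, r i < s i ∧ ∀ j, i < j → r j = s j

/-- The cleaning bound `g(x) = x^x`. -/
def gClean (x : ℕ) : ℕ := x ^ x

/-- The decomposition bound `h(x) = x^{x^{1+x}}`. -/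
def hDec (x : ℕ) : ℕ := x ^ x ^ (1 + x)

/-- The ordinal `ω^d·r_d + ⋯ + ω^0·r_0` associated with the rank
`(r_d, …, r_0)` of a KLM sequence. -/
noncomputable def ordOf {d : ℕ} (r : Fin (d + 1) → ℕ) : Ordinal :=
  (((List.finRange (d + 1)).reverse).map
    (fun (i : Fin (d + 1)) => Ordinal.omega0 ^ (i : ℕ) * (r i : Ordinal))).sum

/-!
Reading ranks as ordinals below `ω^{d+1}` through their coefficient lists turns lexicographic
descent into ordinal descent, and the sizes along the branch are controlled by iterating the
monotone bound `h`.  The length bound is a well-founded induction on `α`, for every `x` and every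
`(x, h)`-controlled descent starting below `α`.  At `α = β + 1` the descent either starts at `β`,
and its tail is an `(h x, h)`-controlled descent below `β`, or lies entirely below `β`, and is
then `(h x, h)`-controlled because `h` is monotone and inflationary; either way
`h_α(x) = 1 + h_β(h x)` absorbs it.  At a limit `α`, an ordinal below `α` with coefficients at
most `x` already lies below `α(x)`, and `h_α(x) = h_{α(x)}(x)`.
-/

open Ordinal

universe u

lemma Ordinal.mul_add_lt_mul {b δ γ ρ : Ordinal.{u}} (hδ : δ < γ) (hρ : ρ < b) :
    b * δ + ρ < b * γ :=
  calc b * δ + ρ < b * δ + b := add_lt_add_right hρ _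
    _ = b * Order.succ δ := by rw [Ordinal.mul_succ]
    _ ≤ b * γ := mul_le_mul_right (Order.succ_le_of_lt hδ) _

/-- `ω^0·l₀ + ω^1·l₁ + ⋯`: the ordinal coded by a coefficient list in `CichonEqs`. -/
noncomputable def evalCNF : List ℕ → Ordinal.{u}
  | [] => 0
  | a :: l => ω * evalCNF l + a

@[simp] lemma evalCNF_nil : evalCNF.{u} [] = 0 := rfl

@[simp] lemma evalCNF_cons (a : ℕ) (l : List ℕ) : evalCNF.{u} (a :: l) = ω * evalCNF l + a := rfl

@[simp] lemma evalCNF_replicate_zero (m : ℕ) : evalCNF.{u} (List.replicate m 0) = 0 := by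
  induction m with
  | zero => rfl
  | succ m ih => simp [List.replicate_succ, ih]

lemma evalCNF_append (p l : List ℕ) :
    evalCNF.{u} (p ++ l) = ω ^ p.length * evalCNF l + evalCNF p := by
  induction p with
  | nil => simp
  | cons a p ih => simp [ih, mul_add, pow_succ', mul_assoc, add_assoc]

lemma evalCNF_eq_take_drop (n : ℕ) (l : List ℕ) :
    evalCNF.{u} l = ω ^ n * evalCNF (l.drop n) + evalCNF (l.take n) := by
  rcases le_or_gt n l.length with h | h
  · conv_lhs => rw [← List.take_append_drop n l]
    rw [evalCNF_append, List.length_take_of_le h]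
  · simp [List.drop_eq_nil_of_le h.le, List.take_of_length_le h.le]

lemma evalCNF_succ_cons (c : ℕ) (l : List ℕ) :
    evalCNF.{u} ((c + 1) :: l) = evalCNF (c :: l) + 1 := by
  simp [add_assoc]

lemma evalCNF_lt_omega0_pow_length (l : List ℕ) : evalCNF.{u} l < ω ^ l.length := by
  induction l with
  | nil => simp
  | cons a l ih =>
    rw [evalCNF_cons, List.length_cons, pow_succ']
    exact Ordinal.mul_add_lt_mul ih (natCast_lt_omega0 a)

lemma evalCNF_cons_lt_cons {l m : List ℕ} (h : evalCNF.{u} l < evalCNF m) (a b : ℕ) :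
    evalCNF.{u} (a :: l) < evalCNF (b :: m) :=
  (Ordinal.mul_add_lt_mul h (natCast_lt_omega0 a)).trans_le le_self_add

lemma evalCNF_lt_omega0_pow_mul_of_length_le {l : List ℕ} {k x : ℕ} (hlen : l.length ≤ k + 1)
    (hl : ∀ a ∈ l, a ≤ x) : evalCNF.{u} l < ω ^ k * (x + 1 : ℕ) := by
  induction l generalizing k with
  | nil => simp [omega0_pos]
  | cons a l ih =>
    cases k with
    | zero =>
      obtain rfl : l = [] := List.eq_nil_of_length_eq_zero (by simpa using hlen)
      simpa [Nat.lt_succ_iff] using hl a (by simp)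
    | succ k =>
      rw [evalCNF_cons, pow_succ', mul_assoc]
      exact Ordinal.mul_add_lt_mul (ih (by simpa using hlen) fun b hb => hl b (by simp [hb]))
        (natCast_lt_omega0 a)

lemma evalCNF_replicate_zero_append_succ_cons (k c : ℕ) (r : List ℕ) :
    evalCNF.{u} (List.replicate k 0 ++ (c + 1) :: r) = ω ^ k * evalCNF (c :: r) + ω ^ k := by
  rw [evalCNF_append, evalCNF_succ_cons, mul_add_one]
  simp

lemma evalCNF_fundamental (k c x : ℕ) (r : List ℕ) :
    evalCNF.{u} (List.replicate k 0 ++ (x + 1) :: c :: r)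
      = ω ^ (k + 1) * evalCNF (c :: r) + ω ^ k * (x + 1 : ℕ) := by
  rw [evalCNF_append, evalCNF_cons (x + 1), mul_add, pow_succ, mul_assoc]
  simp

lemma evalCNF_fundamental_lt (k c x : ℕ) (r : List ℕ) :
    evalCNF.{u} (List.replicate k 0 ++ (x + 1) :: c :: r)
      < evalCNF (List.replicate (k + 1) 0 ++ (c + 1) :: r) := by
  rw [evalCNF_fundamental, evalCNF_replicate_zero_append_succ_cons, pow_succ ω k]
  exact add_lt_add_right (mul_lt_mul_of_pos_left (natCast_lt_omega0 _) (pow_pos omega0_pos k)) _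

lemma lt_evalCNF_fundamental {l : List ℕ} {k c x : ℕ} {r : List ℕ} (hl : ∀ a ∈ l, a ≤ x)
    (hlt : evalCNF.{u} l < evalCNF (List.replicate (k + 1) 0 ++ (c + 1) :: r)) :
    evalCNF.{u} l < evalCNF (List.replicate k 0 ++ (x + 1) :: c :: r) := by
  rw [evalCNF_eq_take_drop (k + 1)] at hlt ⊢
  rw [evalCNF_replicate_zero_append_succ_cons, ← Ordinal.mul_succ] at hlt
  rw [evalCNF_fundamental]
  set δ := evalCNF.{u} (l.drop (k + 1))
  set γ := evalCNF.{u} (c :: r)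
  have hρ : evalCNF.{u} (l.take (k + 1)) < ω ^ k * (x + 1 : ℕ) :=
    evalCNF_lt_omega0_pow_mul_of_length_le (by simp) fun a ha => hl a (List.mem_of_mem_take ha)
  have hδ : δ ≤ γ := by
    by_contra! hγδ
    exact hlt.not_ge <| (mul_le_mul_right (Order.succ_le_of_lt hγδ) _).trans le_self_add
  rcases hδ.lt_or_eq with hδ | hδ
  · refine (Ordinal.mul_add_lt_mul hδ (hρ.trans ?_)).trans_le le_self_add
    rw [pow_succ]
    exact mul_lt_mul_of_pos_left (natCast_lt_omega0 _) (pow_pos omega0_pos k)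
  · rw [hδ]
    exact add_lt_add_right hρ _

lemma List.eq_replicate_zero_or_eq_replicate_zero_append_succ (l : List ℕ) :
    l = List.replicate l.length 0 ∨ ∃ k c r, l = List.replicate k 0 ++ (c + 1) :: r := by
  induction l with
  | nil => simp
  | cons a l ih =>
    rcases a with _ | c
    · rcases ih with hl | ⟨k, c, r, hl⟩
      · exact .inl (by rw [List.length_cons, List.replicate_succ, ← hl])
      · exact .inr ⟨k + 1, c, r, by rw [hl, List.replicate_succ, List.cons_append]⟩
    · exact .inr ⟨0, c, l, rfl⟩

theorem CichonEqs.length_le_of_controlled_descent {h : ℕ → ℕ} {C : List ℕ → ℕ → ℕ}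
    (hC : CichonEqs h C) (hmono : Monotone h) (hinfl : ∀ x, x ≤ h x) (v : List ℕ) (x L : ℕ)
    (s : Fin (L + 1) → List ℕ) (hroot : evalCNF.{u} (s 0) < evalCNF v)
    (hdesc : ∀ j : Fin L, evalCNF.{u} (s j.succ) < evalCNF (s j.castSucc))
    (hctrl : ∀ j : Fin (L + 1), ∀ a ∈ s j, a ≤ h^[j] x) :
    L + 1 ≤ C v x := by
  obtain ⟨-, hsucc, hlimit⟩ := hC
  induction v using (InvImage.wf evalCNF.{u} wellFounded_lt).induction generalizing x L s with
  | _ v ih =>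
  rcases v.eq_replicate_zero_or_eq_replicate_zero_append_succ with hv | ⟨k, c, r, rfl⟩
  · rw [hv, evalCNF_replicate_zero] at hroot
    exact absurd hroot not_lt_zero
  cases k with
  | zero =>
    rw [List.replicate_zero, List.nil_append] at hroot ih ⊢
    rw [hsucc]
    rw [evalCNF_succ_cons, Order.lt_add_one_iff] at hroot
    have hcr : evalCNF.{u} (c :: r) < evalCNF ((c + 1) :: r) := by
      rw [evalCNF_succ_cons]
      exact lt_add_one _
    rcases hroot.lt_or_eq with hlt | heq
    · have := ih (c :: r) hcr (h x) L s hlt hdesc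
        fun j a ha => (hctrl j a ha).trans (hmono.iterate j (hinfl x))
      omega
    · cases L with
      | zero => omega
      | succ L =>
        have := ih (c :: r) hcr (h x) L (fun j => s j.succ)
          (by simpa [heq] using hdesc 0)
          (fun j => by simpa only [Fin.succ_castSucc] using hdesc j.succ)
          fun j a ha => by simpa [Function.iterate_succ_apply] using hctrl j.succ a ha
        omega
  | succ k =>
    rw [hlimit]
    exact ih _ (evalCNF_fundamental_lt k c x r) x L s
      (lt_evalCNF_fundamental (hctrl 0) hroot) hdesc hctrl

lemma sum_reverse_finRange_eq_evalCNF (n : ℕ) (r : Fin n → ℕ) :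
    (((List.finRange n).reverse).map
      (fun i : Fin n => ω ^ (i : ℕ) * (r i : Ordinal.{u}))).sum = evalCNF (List.ofFn r) := by
  induction n with
  | zero => simp
  | succ n ih =>
    rw [List.finRange_succ_last, List.reverse_append, List.ofFn_succ', List.concat_eq_append,
      evalCNF_append, ← ih]
    simp [List.map_reverse, Function.comp_def]

lemma ordOf_eq_evalCNF {d : ℕ} (r : Fin (d + 1) → ℕ) : ordOf.{u} r = evalCNF (List.ofFn r) :=
  sum_reverse_finRange_eq_evalCNF (d + 1) r

lemma evalCNF_ofFn_lt_omega0_pow {n : ℕ} (r : Fin n → ℕ) :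
    evalCNF.{u} (List.ofFn r) < ω ^ n := by
  simpa using evalCNF_lt_omega0_pow_length (List.ofFn r)

lemma LexLt.evalCNF_ofFn_lt : ∀ {d : ℕ} {r s : Fin (d + 1) → ℕ}, LexLt r s →
    evalCNF.{u} (List.ofFn r) < evalCNF (List.ofFn s)
  | d, r, s, ⟨i, hi, heq⟩ => by
    rw [List.ofFn_succ, List.ofFn_succ]
    induction i using Fin.cases with
    | zero =>
      have htail : (fun j : Fin d => r j.succ) = fun j => s j.succ :=
        funext fun j => heq j.succ (Fin.succ_pos j)
      rw [htail, evalCNF_cons, evalCNF_cons]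
      exact add_lt_add_right (by exact_mod_cast hi) _
    | succ i =>
      cases d with
      | zero => exact i.elim0
      | succ d =>
        exact evalCNF_cons_lt_cons
          (LexLt.evalCNF_ofFn_lt ⟨i, hi, fun j hj => heq j.succ (Fin.succ_lt_succ_iff.2 hj)⟩) _ _

lemma Fin.le_iterate_of_le_of_succ_le {f : ℕ → ℕ} (hf : Monotone f) {L x : ℕ}
    {a : Fin (L + 1) → ℕ} (h0 : a 0 ≤ x) (hstep : ∀ j : Fin L, a j.succ ≤ f (a j.castSucc)) :
    ∀ j : Fin (L + 1), a j ≤ f^[j] x := by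
  intro j
  induction j using Fin.induction with
  | zero => simpa using h0
  | succ j ih =>
    rw [Fin.val_succ, Function.iterate_succ_apply']
    exact (hstep j).trans (hf (by simpa using ih))

lemma hDec_monotone : Monotone hDec := by
  intro x y hxy
  rcases Nat.eq_zero_or_pos x with rfl | hx
  · rcases Nat.eq_zero_or_pos y with rfl | hy
    · rfl
    · exact Nat.one_le_iff_ne_zero.2 (pow_ne_zero _ hy.ne')
  · unfold hDec
    gcongr <;> omega

lemma le_hDec (x : ℕ) : x ≤ hDec x := by
  rcases Nat.eq_zero_or_pos x with rfl | hx
  · exact Nat.zero_le _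
  · exact Nat.le_self_pow (pow_pos hx _).ne' x

theorem stmt19_general {K : Type} {d : ℕ} (size : K → ℕ) (rank : K → Fin (d + 1) → ℕ)
    (hNsize : ∀ ξ : K, max d (Finset.univ.sup fun i => rank ξ i) ≤ size ξ)
    (n₀ : ℕ)  -- the size of the initial KLM sequence ξ₀
    (L : ℕ) (ξs : Fin (L + 1) → K)
    (hroot : size (ξs 0) ≤ gClean n₀)
    (hstep : ∀ j : Fin L, size (ξs j.succ) ≤ hDec (size (ξs j.castSucc)))
    (hdec : ∀ j : Fin L, LexLt (rank (ξs j.succ)) (rank (ξs j.castSucc)))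
    (C : List ℕ → ℕ → ℕ) (hC : CichonEqs hDec C) :
    (∀ j : Fin L,
        ordOf (rank (ξs j.succ)) < ordOf (rank (ξs j.castSucc))) ∧
    (∀ j : Fin (L + 1), ordOf (rank (ξs j)) < Ordinal.omega0 ^ (d + 1)) ∧
    (∀ j : Fin (L + 1),
        max d (Finset.univ.sup fun i => rank (ξs j) i)
          ≤ hDec^[(j : ℕ)] (gClean n₀)) ∧
    L + 1 ≤ C (List.replicate (d + 1) 0 ++ [1]) (gClean n₀) := by
  have hnorm (j : Fin (L + 1)) :
      max d (Finset.univ.sup fun i => rank (ξs j) i) ≤ hDec^[j] (gClean n₀) :=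
    (hNsize _).trans <|
      Fin.le_iterate_of_le_of_succ_le (a := fun j => size (ξs j)) hDec_monotone hroot hstep j
  have hcoeff (j : Fin (L + 1)) : ∀ a ∈ List.ofFn (rank (ξs j)), a ≤ hDec^[j] (gClean n₀) := by
    intro a ha
    obtain ⟨i, rfl⟩ := List.mem_ofFn.1 ha
    exact (Finset.le_sup (Finset.mem_univ i)).trans ((le_max_right _ _).trans (hnorm j))
  refine ⟨fun j => ?_, fun j => ?_, hnorm, ?_⟩
  · rw [ordOf_eq_evalCNF, ordOf_eq_evalCNF]
    exact (hdec j).evalCNF_ofFn_lt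
  · rw [ordOf_eq_evalCNF]
    exact evalCNF_ofFn_lt_omega0_pow _
  · refine hC.length_le_of_controlled_descent.{0} hDec_monotone le_hDec _ _ L
      (fun j => List.ofFn (rank (ξs j))) ?_ (fun j => (hdec j).evalCNF_ofFn_lt) hcoeff
    simpa [evalCNF_append] using evalCNF_ofFn_lt_omega0_pow (rank (ξs 0))

/-- Along any branch `ξs 0, ξs 1, …, ξs L` of a decomposition forest (the root
being produced by cleaning, each step by decomposition), the sequence of
ordinal ranks is a strictly descending sequence of ordinals below `ω^{d+1}`
that is `(g(size ξ₀), h)`-controlled, and consequently (by the length function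
theorem) the branch has length at most `h_{ω^{d+1}}(g(size ξ₀))`, the latter
value of the Cichoń hierarchy being expressed through any `C` satisfying its
defining equations, with `ω^{d+1}` represented by the coefficient list
`replicate (d+1) 0 ++ [1]`. -/
theorem stmt19 {K : Type} {d : ℕ} (size : K → ℕ) (rank : K → Fin (d + 1) → ℕ)
    (hNsize : ∀ ξ : K, max d (Finset.univ.sup fun i => rank ξ i) ≤ size ξ)
    (n₀ : ℕ)  -- the size of the initial KLM sequence ξ₀
    (L : ℕ) (ξs : Fin (L + 1) → K)
    (hroot : size (ξs 0) ≤ gClean n₀)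
    (hstep : ∀ j : Fin L, size (ξs j.succ) ≤ hDec (size (ξs j.castSucc)))
    (hdec : ∀ j : Fin L, LexLt (rank (ξs j.succ)) (rank (ξs j.castSucc)))
    (hbig : d + 1 ≤ gClean n₀)
    (C : List ℕ → ℕ → ℕ) (hC : CichonEqs hDec C) :
    (∀ j : Fin L,
        ordOf (rank (ξs j.succ)) < ordOf (rank (ξs j.castSucc))) ∧
    (∀ j : Fin (L + 1), ordOf (rank (ξs j)) < Ordinal.omega0 ^ (d + 1)) ∧
    (∀ j : Fin (L + 1),
        max d (Finset.univ.sup fun i => rank (ξs j) i)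
          ≤ hDec^[(j : ℕ)] (gClean n₀)) ∧
    L + 1 ≤ C (List.replicate (d + 1) 0 ++ [1]) (gClean n₀) :=
  stmt19_general size rank hNsize n₀ L ξs hroot hstep hdec C hC
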